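/- Let w₁ = w(x₁), w₂ = w(x₂) where w = x·e^{w^{k−1}}. Then P(x₁,x₂) := log((w₁−w₂)/(x₁−x₂)) − (w₁^k − w₂^k)/(w₁ − w₂) is a well-defined formal power series in x₁, x₂ (the argument of the logarithm has constant term 1), and it satisfies (1/(k−1))·[(1−(k−1)w₁^{k−1})·x₁∂/∂x₁ + (1−(k−1)w₂^{k−1})·x₂∂/∂x₂] P = ((x₂w₁ − x₁w₂)/(x₁−x₂))·((w₁^{k−1} − w₂^{k−1})/(w₁ − w₂)). -/

import Mathlib

open MvPowerSeries

/-- Composition `f(a)` of univariate formal power series, valid when `a` has zero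
constant term. -/
noncomputable def psComp (f a : PowerSeries ℚ) : PowerSeries ℚ :=
  PowerSeries.mk fun n => ∑ j ∈ Finset.range (n + 1),
    (PowerSeries.coeff j f) * (PowerSeries.coeff n (a ^ j))

/-- Composition `f(a)` of a univariate series `f` with a bivariate series `a`
having zero constant term. -/
noncomputable def mvComp (f : PowerSeries ℚ) (a : MvPowerSeries (Fin 2) ℚ) :
    MvPowerSeries (Fin 2) ℚ :=
  fun e => ∑ j ∈ Finset.range (e.sum (fun _ m => m) + 1),
    (PowerSeries.coeff j f) * (MvPowerSeries.coeff e (a ^ j))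

/-- The partial derivative `∂/∂x_j` of a bivariate formal power series. -/
noncomputable def pd (j : Fin 2) (f : MvPowerSeries (Fin 2) ℚ) : MvPowerSeries (Fin 2) ℚ :=
  fun e => ((e j + 1 : ℕ) : ℚ) * MvPowerSeries.coeff (e + Finsupp.single j 1) f

/-- A univariate power series viewed as a bivariate series in the variable `x_j`. -/
noncomputable def emb (j : Fin 2) (f : PowerSeries ℚ) : MvPowerSeries (Fin 2) ℚ :=
  fun e => if ∀ i, i ≠ j → e i = 0 then PowerSeries.coeff (e j) f else 0

/-!
Write `n = k - 1`, `wⱼ = w(xⱼ)` and let `θ = Σⱼ (1 - n wⱼⁿ) xⱼ ∂ⱼ`, a derivation of `ℚ⟦x₀, x₁⟧`.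
Differentiating `w = x e^{wⁿ}` gives `(1 - n wⁿ) x w' = w`, so `θ` fixes `w₀` and `w₁` and acts
as the Euler operator on them: from `(w₀ - w₁) B = w₀ⁿ⁺¹ - w₁ⁿ⁺¹` one gets `θ B = n B`.
Applying `θ` to `(x₀ - x₁) A = w₀ - w₁` computes `θ A = A θ (log A)`, and the claimed identity
becomes a polynomial identity once the nonzero factors `x₀ - x₁`, `w₀ - w₁` and `A` of the
domain `ℚ⟦x₀, x₁⟧` are cleared.
-/

open scoped PowerSeries

namespace MvPowerSeries

variable {σ R : Type*} [CommRing R] {a : MvPowerSeries σ R}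

theorem coeff_eq_zero_of_pow_dvd (ha : constantCoeff a = 0) {N : ℕ} {f : MvPowerSeries σ R}
    (h : a ^ N ∣ f) {e : σ →₀ ℕ} (he : e.degree < N) : coeff e f = 0 := by
  obtain ⟨g, rfl⟩ := h
  apply coeff_of_lt_order
  calc (e.degree : ℕ∞) < N := by exact_mod_cast he
    _ ≤ (a ^ N).order := le_order_pow_of_constantCoeff_eq_zero N ha
    _ ≤ (a ^ N).order + g.order := le_self_add
    _ ≤ (a ^ N * g).order := le_order_mul

theorem eq_zero_of_forall_pow_dvd (ha : constantCoeff a = 0) {f : MvPowerSeries σ R}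
    (h : ∀ N, a ^ N ∣ f) : f = 0 := by
  ext e
  exact coeff_eq_zero_of_pow_dvd ha (h (e.degree + 1)) (Nat.lt_succ_self _)

end MvPowerSeries

namespace PowerSeries

section Subst

variable {σ R : Type*} [CommRing R] {a : MvPowerSeries σ R}

theorem coeff_subst_eq_sum_range (ha : MvPowerSeries.constantCoeff a = 0) (f : R⟦X⟧)
    {e : σ →₀ ℕ} {N : ℕ} (he : e.degree < N) :
    MvPowerSeries.coeff e (f.subst a) =
      ∑ d ∈ Finset.range N, coeff d f * MvPowerSeries.coeff e (a ^ d) := by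
  rw [coeff_subst (HasSubst.of_constantCoeff_zero ha)]
  refine finsum_eq_sum_of_support_subset _ fun d hd => ?_
  simp only [Function.mem_support, Finset.coe_range, Set.mem_Iio] at hd ⊢
  by_contra hNd
  exact hd (by rw [coeff_eq_zero_of_pow_dvd ha (pow_dvd_pow a (not_lt.mp hNd)) he, smul_zero])

theorem constantCoeff_subst_of_constantCoeff_eq_zero (ha : MvPowerSeries.constantCoeff a = 0)
    (f : R⟦X⟧) : MvPowerSeries.constantCoeff (f.subst a) = constantCoeff f := by
  rw [← MvPowerSeries.coeff_zero_eq_constantCoeff_apply,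
    coeff_subst_eq_sum_range ha f (N := 1) (by simp)]
  simp

theorem pderiv_subst (ha : MvPowerSeries.constantCoeff a = 0) (f : R⟦X⟧) (i : σ) :
    pderiv R i (f.subst a) = (d⁄dX R f).subst a * pderiv R i a := by
  have hs := HasSubst.of_constantCoeff_zero ha
  set Δ : R⟦X⟧ → MvPowerSeries σ R :=
    fun g => pderiv R i (g.subst a) - (d⁄dX R g).subst a * pderiv R i a with hΔ
  have shift : ∀ c q, Δ (X * q + C c) = a * Δ q := by
    intro c q
    simp only [hΔ, ← coe_substAlgHom hs, map_add, map_mul, substAlgHom_X, map_one, map_zero,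
      Derivation.leibniz, derivative_C, derivative_X, smul_eq_mul]
    rw [coe_substAlgHom, subst_C, MvPowerSeries.pderiv_C]
    ring
  have dvd : ∀ N g, a ^ N ∣ Δ g := by
    intro N
    induction N with
    | zero => simp
    | succ N ih =>
      intro g
      rw [eq_X_mul_shift_add_const g, shift, pow_succ']
      exact mul_dvd_mul_left a (ih _)
  exact sub_eq_zero.mp (MvPowerSeries.eq_zero_of_forall_pow_dvd ha (dvd · f))

end Subst

section Log

variable {K : Type*} [CommRing K] [Algebra ℚ K]

theorem one_add_X_mul_derivative_log : (1 + X) * d⁄dX K (log K) = 1 := by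
  ext n
  rw [deriv_log, add_mul, one_mul, map_add]
  cases n with
  | zero => simp
  | succ n => simp [pow_succ]

variable {σ : Type*} {A : MvPowerSeries σ K}

theorem mul_subst_derivative_log (hA : MvPowerSeries.constantCoeff A = 1) :
    A * (d⁄dX K (log K)).subst (A - 1) = 1 := by
  have hs : HasSubst (A - 1) := HasSubst.of_constantCoeff_zero (by simp [hA])
  have h := congrArg (substAlgHom hs) (one_add_X_mul_derivative_log (K := K))
  rwa [map_mul, map_add, map_one, substAlgHom_X, add_sub_cancel, coe_substAlgHom] at h

theorem mul_pderiv_log_subst (hA : MvPowerSeries.constantCoeff A = 1) (i : σ) :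
    A * pderiv K i ((log K).subst (A - 1)) = pderiv K i A := by
  rw [pderiv_subst (by simp [hA]), map_sub, MvPowerSeries.pderiv_one, sub_zero, ← mul_assoc,
    mul_subst_derivative_log hA, one_mul]

theorem exp_subst_log_subst (hA : MvPowerSeries.constantCoeff A = 1) :
    (exp K).subst ((log K).subst (A - 1)) = A := by
  set L := (log K).subst (A - 1)
  set iA := (d⁄dX K (log K)).subst (A - 1)
  have hL : MvPowerSeries.constantCoeff L = 0 :=
    constantCoeff_subst_eq_zero (by simp [hA]) _ constantCoeff_log
  have hiA : A * iA = 1 := mul_subst_derivative_log hA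
  -- `exp L * A⁻¹` has vanishing derivatives and constant term 1
  have key : (exp K).subst L * iA = 1 := by
    have := IsAddTorsionFree.of_module_rat (M := K)
    refine MvPowerSeries.pderiv.ext (fun i => ?_) ?_
    · have hL' : pderiv K i L = iA * pderiv K i A := by
        rw [← mul_pderiv_log_subst hA i, ← mul_assoc, mul_comm iA, hiA, one_mul]
      rw [Derivation.leibniz, pderiv_subst hL, derivative_exp, hL',
        (pderiv K i).leibniz_of_mul_eq_one (mul_comm A iA ▸ hiA), MvPowerSeries.pderiv_one]
      simp only [smul_eq_mul]
      ring
    · rw [map_mul, constantCoeff_subst_of_constantCoeff_eq_zero hL, constantCoeff_exp, one_mul,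
        map_one]
      have := congrArg MvPowerSeries.constantCoeff hiA
      rwa [map_mul, hA, one_mul, map_one] at this
  calc (exp K).subst L = (exp K).subst L * iA * A := by rw [mul_assoc, mul_comm iA, hiA, mul_one]
    _ = A := by rw [key, one_mul]

end Log

section FunctionalEquation

variable {R : Type*} [CommRing R] [Algebra ℚ R] {w : R⟦X⟧} {n : ℕ}

theorem one_sub_mul_X_mul_derivative_eq (hn : n ≠ 0) (hw : constantCoeff w = 0)
    (heq : w = X * (exp R).subst (w ^ n)) :
    (1 - (n : R⟦X⟧) * w ^ n) * (X * d⁄dX R w) = w := by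
  obtain ⟨m, rfl⟩ : ∃ m, n = m + 1 := ⟨n - 1, by omega⟩
  have hwn : constantCoeff (w ^ (m + 1)) = 0 := by simp [hw]
  have hdw : d⁄dX R w = (exp R).subst (w ^ (m + 1))
      + X * ((exp R).subst (w ^ (m + 1)) * (((m + 1 : ℕ) : R⟦X⟧) * w ^ m * d⁄dX R w)) := by
    conv_lhs => rw [heq]
    rw [Derivation.leibniz, derivative_X, derivative_subst (HasSubst.of_constantCoeff_zero' hwn),
      derivative_exp, Derivation.leibniz_pow, Nat.add_sub_cancel]
    simp only [smul_eq_mul, nsmul_eq_mul]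
    ring
  linear_combination X * hdw - (1 + ((m + 1 : ℕ) : R⟦X⟧) * w ^ m * (X * d⁄dX R w)) * heq

theorem coeff_one_eq_one_of_eq_X_mul_exp_subst (hn : n ≠ 0) (hw : constantCoeff w = 0)
    (heq : w = X * (exp R).subst (w ^ n)) : coeff 1 w = 1 := by
  rw [heq, coeff_succ_X_mul, coeff_zero_eq_constantCoeff_apply]
  exact (constantCoeff_subst_of_constantCoeff_eq_zero
    (by rw [map_pow, show MvPowerSeries.constantCoeff w = 0 from hw, zero_pow hn]) _).trans
    constantCoeff_exp

end FunctionalEquation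

end PowerSeries

section DividedDifference

variable {R : Type*} [CommRing R]

noncomputable def divDiff (f : R⟦X⟧) : MvPowerSeries (Fin 2) R :=
  fun e => PowerSeries.coeff (e.degree + 1) f

theorem coeff_X_mul_divDiff (f : R⟦X⟧) (j : Fin 2) (e : Fin 2 →₀ ℕ) :
    coeff e (X j * divDiff f) = if e j = 0 then 0 else PowerSeries.coeff e.degree f := by
  rw [X, coeff_monomial_mul, one_mul]
  split_ifs with hle he he
  · exact absurd (Finsupp.single_le_iff.mp hle) (by omega)
  · show PowerSeries.coeff ((e - Finsupp.single j 1).degree + 1) f = _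
    conv_rhs => rw [← tsub_add_cancel_of_le hle, map_add, Finsupp.degree_single]
  · rfl
  · exact absurd (Finsupp.single_le_iff.mpr (Nat.one_le_iff_ne_zero.mpr he)) hle

theorem X_sub_X_mul_divDiff (f : R⟦X⟧) :
    (X 0 - X 1) * divDiff f = f.subst (X 0) - f.subst (X 1) := by
  ext e
  have hdeg : e.degree = e 0 + e 1 := by rw [Finsupp.degree_eq_sum, Fin.sum_univ_two]
  have h0 : e = Finsupp.single 0 (e 0) ↔ e 1 = 0 := by
    rw [Finsupp.ext_iff, Fin.forall_fin_two]; simp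
  have h1 : e = Finsupp.single 1 (e 1) ↔ e 0 = 0 := by
    rw [Finsupp.ext_iff, Fin.forall_fin_two]; simp
  rw [sub_mul, map_sub, map_sub, coeff_X_mul_divDiff, coeff_X_mul_divDiff,
    PowerSeries.coeff_subst_single, PowerSeries.coeff_subst_single]
  simp only [h0, h1]
  by_cases he0 : e 0 = 0 <;> by_cases he1 : e 1 = 0 <;> simp [he0, he1, hdeg]

theorem constantCoeff_divDiff (f : R⟦X⟧) :
    constantCoeff (divDiff f) = PowerSeries.coeff 1 f := by
  rw [← coeff_zero_eq_constantCoeff_apply]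
  show PowerSeries.coeff ((0 : Fin 2 →₀ ℕ).degree + 1) f = _
  rw [map_zero, zero_add]

theorem X_zero_sub_X_one_ne_zero [Nontrivial R] : (X 0 - X 1 : MvPowerSeries (Fin 2) R) ≠ 0 :=
  fun h => by
    simpa [coeff_X, Finsupp.single_eq_single_iff] using congrArg (coeff (Finsupp.single 0 1)) h

end DividedDifference

section WeightedEuler

variable {σ R : Type*} [Fintype σ] [CommRing R]

noncomputable def weightedEuler (n : ℕ) (w : R⟦X⟧) :
    Derivation R (MvPowerSeries σ R) (MvPowerSeries σ R) :=
  ∑ j, ((1 - (n : MvPowerSeries σ R) * w.subst (X j) ^ n) * X j) • pderiv R j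

variable (n : ℕ) (w : R⟦X⟧)

theorem weightedEuler_apply (f : MvPowerSeries σ R) :
    weightedEuler n w f =
      ∑ j, (1 - (n : MvPowerSeries σ R) * w.subst (X j) ^ n) * X j * pderiv R j f := by
  rw [weightedEuler, ← Derivation.coeFnAddMonoidHom_apply, map_sum, Finset.sum_apply]
  rfl

theorem weightedEuler_X (i : σ) :
    weightedEuler n w (X i) = (1 - (n : MvPowerSeries σ R) * w.subst (X i) ^ n) * X i := by
  classical
  rw [weightedEuler_apply, Finset.sum_eq_single i
    (fun j _ hj => by rw [pderiv_X_of_ne hj.symm, mul_zero]) (by simp), pderiv_X_self, mul_one]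

theorem weightedEuler_subst_X (hw : (1 - (n : R⟦X⟧) * w ^ n) * (PowerSeries.X * d⁄dX R w) = w)
    (i : σ) : weightedEuler n w (w.subst (X i)) = w.subst (X i) := by
  simp only [weightedEuler_apply, PowerSeries.pderiv_subst (constantCoeff_X i)]
  rw [Finset.sum_eq_single i (fun j _ hj => by rw [pderiv_X_of_ne hj.symm, mul_zero, mul_zero])
    (by simp), pderiv_X_self, mul_one]
  conv_rhs => rw [← hw]
  rw [← PowerSeries.coe_substAlgHom (PowerSeries.HasSubst.X i)]
  simp [mul_assoc, PowerSeries.substAlgHom_X]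

theorem weightedEuler_mul_log_subst {K : Type*} [CommRing K] [Algebra ℚ K] (w : K⟦X⟧)
    {A : MvPowerSeries σ K} (hA : constantCoeff A = 1) :
    A * weightedEuler n w ((PowerSeries.log K).subst (A - 1)) = weightedEuler n w A := by
  simp only [weightedEuler_apply, Finset.mul_sum, ← PowerSeries.mul_pderiv_log_subst hA]
  exact Finset.sum_congr rfl fun _ _ => by ring

end WeightedEuler

namespace Derivation

variable {S R : Type*} [CommRing S] [CommRing R] [NoZeroDivisors R] [Algebra S R]
  (θ : Derivation S R R) (n : ℕ) {w₀ w₁ : R}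

theorem map_eq_nat_mul_of_mul_eq_pow_sub_pow (hw₀ : θ w₀ = w₀) (hw₁ : θ w₁ = w₁)
    (hw : w₀ - w₁ ≠ 0) {B : R} (hB : (w₀ - w₁) * B = w₀ ^ (n + 1) - w₁ ^ (n + 1)) :
    θ B = n * B := by
  have h := congrArg θ hB
  simp only [leibniz, map_sub, leibniz_pow, hw₀, hw₁, smul_eq_mul, nsmul_eq_mul,
    Nat.add_sub_cancel] at h
  push_cast at h
  refine mul_left_cancel₀ hw ?_
  linear_combination h - ((n : R) + 1) * hB

theorem map_log_sub_divDiff_pow {x₀ x₁ A L B C E : R}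
    (hx₀ : θ x₀ = (1 - n * w₀ ^ n) * x₀) (hx₁ : θ x₁ = (1 - n * w₁ ^ n) * x₁)
    (hw₀ : θ w₀ = w₀) (hw₁ : θ w₁ = w₁) (hx : x₀ - x₁ ≠ 0) (hA₀ : A ≠ 0)
    (hA : (x₀ - x₁) * A = w₀ - w₁) (hL : A * θ L = θ A)
    (hB : (w₀ - w₁) * B = w₀ ^ (n + 1) - w₁ ^ (n + 1))
    (hC : (w₀ - w₁) * C = w₀ ^ n - w₁ ^ n)
    (hE : (x₀ - x₁) * E = x₁ * w₀ - x₀ * w₁) :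
    θ (L - B) = n * (E * C) := by
  have hw : w₀ - w₁ ≠ 0 := hA ▸ mul_ne_zero hx hA₀
  have hθB := θ.map_eq_nat_mul_of_mul_eq_pow_sub_pow n hw₀ hw₁ hw hB
  have hθA := congrArg θ hA
  simp only [leibniz, map_sub, hx₀, hx₁, hw₀, hw₁, smul_eq_mul] at hθA
  refine mul_left_cancel₀ (mul_ne_zero (mul_ne_zero hx hw) hA₀) ?_
  rw [map_sub, hθB]
  linear_combination (x₀ - x₁) * (w₀ - w₁) * hL + (w₀ - w₁) * hθA
    - n * A * (x₀ - x₁) * hB - n * A * (w₀ - w₁) * C * hE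
    - n * A * (x₁ * w₀ - x₀ * w₁) * hC - (w₀ - w₁) * hA

end Derivation

theorem psComp_eq_subst (f : ℚ⟦X⟧) {a : ℚ⟦X⟧} (ha : PowerSeries.constantCoeff a = 0) :
    psComp f a = f.subst a := by
  ext n
  rw [psComp, PowerSeries.coeff_mk]
  exact (PowerSeries.coeff_subst_eq_sum_range ha f (e := Finsupp.single () n) (by simp)).symm

theorem mvComp_eq_subst (f : ℚ⟦X⟧) {a : MvPowerSeries (Fin 2) ℚ} (ha : constantCoeff a = 0) :
    mvComp f a = f.subst a := by
  ext e
  exact (PowerSeries.coeff_subst_eq_sum_range ha f (Nat.lt_succ_self _)).symm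

theorem pd_eq_pderiv (j : Fin 2) (f : MvPowerSeries (Fin 2) ℚ) : pd j f = pderiv ℚ j f := by
  ext e
  rw [coeff_pderiv, mul_comm, ← Nat.cast_succ]
  rfl

theorem emb_eq_subst (j : Fin 2) (f : ℚ⟦X⟧) : emb j f = f.subst (X j) := by
  ext e
  rw [PowerSeries.coeff_subst_single]
  refine if_congr ⟨fun h => ?_, fun h i hi => ?_⟩ rfl rfl
  · ext i
    by_cases hi : i = j
    · simp [hi]
    · simp [Finsupp.single_eq_of_ne hi, h i hi]
  · rw [h, Finsupp.single_eq_of_ne hi]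

/-- With `w₁ = w(x₁)`, `w₂ = w(x₂)` and `w = x e^{w^{k−1}}`, the series
`P = log((w₁−w₂)/(x₁−x₂)) − (w₁^k−w₂^k)/(w₁−w₂)` is well defined (the divided
differences `A, B, C, E` exist as power series, the argument `A` of the
logarithm has constant term 1, and `L = log A`), and `P = L − B` satisfies
`(1−(k−1)w₁^{k−1}) x₁ ∂P/∂x₁ + (1−(k−1)w₂^{k−1}) x₂ ∂P/∂x₂
  = (k−1)·((x₂w₁−x₁w₂)/(x₁−x₂))·((w₁^{k−1}−w₂^{k−1})/(w₁−w₂))`. -/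
theorem two_part_series_pde (k : ℕ) (hk : 2 ≤ k) (w : PowerSeries ℚ)
    (h0 : PowerSeries.constantCoeff w = 0)
    (heq : w = PowerSeries.X * psComp (PowerSeries.exp ℚ) (w ^ (k - 1))) :
    ∃ A L B C E : MvPowerSeries (Fin 2) ℚ,
      (MvPowerSeries.X 0 - MvPowerSeries.X 1) * A = emb 0 w - emb 1 w ∧
      MvPowerSeries.constantCoeff A = 1 ∧
      MvPowerSeries.constantCoeff L = 0 ∧
      mvComp (PowerSeries.exp ℚ) L = A ∧
      (emb 0 w - emb 1 w) * B = (emb 0 w) ^ k - (emb 1 w) ^ k ∧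
      (emb 0 w - emb 1 w) * C = (emb 0 w) ^ (k - 1) - (emb 1 w) ^ (k - 1) ∧
      (MvPowerSeries.X 0 - MvPowerSeries.X 1) * E =
        MvPowerSeries.X 1 * emb 0 w - MvPowerSeries.X 0 * emb 1 w ∧
      (1 - ((k - 1 : ℕ) : MvPowerSeries (Fin 2) ℚ) * (emb 0 w) ^ (k - 1)) *
          (MvPowerSeries.X 0 * pd 0 (L - B)) +
        (1 - ((k - 1 : ℕ) : MvPowerSeries (Fin 2) ℚ) * (emb 1 w) ^ (k - 1)) *
          (MvPowerSeries.X 1 * pd 1 (L - B)) =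
        ((k - 1 : ℕ) : MvPowerSeries (Fin 2) ℚ) * (E * C) := by
  obtain ⟨n, rfl⟩ : ∃ n, k = n + 1 := ⟨k - 1, by omega⟩
  have hn : n ≠ 0 := by omega
  simp only [Nat.add_sub_cancel, emb_eq_subst, pd_eq_pderiv] at heq ⊢
  rw [psComp_eq_subst _ (by simp [h0, hn])] at heq
  set W : Fin 2 → MvPowerSeries (Fin 2) ℚ := fun j => w.subst (X j)
  set A := divDiff w
  have hA : (X 0 - X 1) * A = W 0 - W 1 := X_sub_X_mul_divDiff w
  have hA₀ : constantCoeff A = 1 := by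
    rw [constantCoeff_divDiff, PowerSeries.coeff_one_eq_one_of_eq_X_mul_exp_subst hn h0 heq]
  have hL₀ : constantCoeff ((PowerSeries.log ℚ).subst (A - 1)) = 0 :=
    PowerSeries.constantCoeff_subst_eq_zero (by simp [hA₀]) _ PowerSeries.constantCoeff_log
  have hB := (Commute.all (W 0) (W 1)).mul_geom_sum₂ (n + 1)
  have hC := (Commute.all (W 0) (W 1)).mul_geom_sum₂ n
  have hE : (X 0 - X 1) * (X 1 * A - W 1) = X 1 * W 0 - X 0 * W 1 := by
    linear_combination X 1 * hA
  have hθW : ∀ i, weightedEuler n w (W i) = W i :=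
    weightedEuler_subst_X n w (PowerSeries.one_sub_mul_X_mul_derivative_eq hn h0 heq)
  refine ⟨A, _, _, _, _, hA, hA₀, hL₀,
    by rw [mvComp_eq_subst _ hL₀, PowerSeries.exp_subst_log_subst hA₀], hB, hC, hE, ?_⟩
  have key := (weightedEuler n w).map_log_sub_divDiff_pow n (weightedEuler_X n w 0)
    (weightedEuler_X n w 1) (hθW 0) (hθW 1) X_zero_sub_X_one_ne_zero
    (fun h => by simp [h] at hA₀) hA (weightedEuler_mul_log_subst n w hA₀) hB hC hE
  rw [weightedEuler_apply, Fin.sum_univ_two] at key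
  simpa only [mul_assoc] using key
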